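/- arXiv:2106.07281 — 6 statements merged into one kernel-verified Lean document; each statement's English description precedes it below -/
import Mathlib

section
/- Let (Ω,(F_n)_{n∈ℕ},P) be a filtered probability space, let F, G : Ω → [0,∞] be measurable, and let K ∈ [0,∞). Suppose that for every weight w on Ω one has E(F · w) ≤ K · E(G · w*). Then for every r ∈ (1,∞), ‖F‖_{L^r(Ω)} ≤ K r ‖G‖_{L^r(Ω)}. (This follows from Hölder's inequality, Doob's maximal inequality ‖w*‖_{L^{r'}} ≤ r ‖w‖_{L^{r'}} with r' = r/(r−1), and duality of L^r and L^{r'}.) -/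
/-!
Test the hypothesis with the weight `w = F^(r-1)`, which is extremal for the duality between
`L^r` and `L^q`, `q = r/(r-1)`: by Hölder and Doob's `L^q` inequality `‖w*‖_q ≤ r ‖w‖_q`,
`E(F^r) ≤ K E(G w*) ≤ K ‖G‖_r ‖w*‖_q ≤ K r ‖G‖_r ‖F‖_r^(r-1)`, and dividing by the finite
quantity `‖F‖_r^(r-1)` gives the claim; truncating `F` at height `N` makes everything finite and
monotone convergence removes the truncation.

Doob's inequality comes from the weak-type bound `t μ{t ≤ M} ≤ ∫_{t ≤ M} w` of `maximal_ineq`: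
the layer-cake formula, applied to `μ` and to `μ.withDensity w`, turns it into
`E(M^q) ≤ r E(w M^(q-1))`, and Hölder closes the estimate.
-/

open MeasureTheory ENNReal Set Finset

namespace ENNReal

lemma rpow_le_of_le_mul_rpow {x a : ℝ≥0∞} {u v : ℝ} (hu : 0 < u) (huv : u + v = 1)
    (hx : x ≠ ∞) (h : x ≤ a * x ^ v) : x ^ u ≤ a := by
  rcases eq_or_ne x 0 with rfl | hx0
  · simp [zero_rpow_of_pos hu]
  have hsplit : x ^ u * x ^ v = x := by rw [← rpow_add u v hx0 hx, huv, rpow_one]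
  refine (ENNReal.mul_le_mul_iff_left ?_ ?_).mp (hsplit.trans_le h)
  · simp [rpow_eq_zero_iff, hx0, hx]
  · simp [rpow_eq_top_iff, hx0, hx]

lemma iSup_min_natCast (a : ℝ≥0∞) : ⨆ N : ℕ, min a N = a := by
  rw [← inf_iSup_eq, iSup_natCast, inf_top_eq]

end ENNReal

section Truncation

variable {Ω : Type*} [MeasurableSpace Ω] {μ : Measure Ω} {p : ℝ} {B : ℝ≥0∞}

lemma lintegral_iSup_rpow_rpow_le {f : ℕ → Ω → ℝ≥0∞} (hf : ∀ n, Measurable (f n))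
    (hmono : Monotone f) (hp : 0 < p) (h : ∀ n, (∫⁻ ω, f n ω ^ p ∂μ) ^ (1 / p) ≤ B) :
    (∫⁻ ω, (⨆ n, f n ω) ^ p ∂μ) ^ (1 / p) ≤ B := by
  have hsup : ∀ ω, (⨆ n, f n ω) ^ p = ⨆ n, f n ω ^ p :=
    fun ω => (orderIsoRpow p hp).map_iSup _
  rw [one_div, rpow_inv_le_iff hp]
  simp_rw [hsup]
  rw [lintegral_iSup (fun n => (hf n).pow_const p)
    fun a b hab ω => rpow_le_rpow (hmono hab ω) hp.le]
  exact iSup_le fun n => (rpow_inv_le_iff hp).mp (by simpa only [one_div] using h n)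

lemma lintegral_rpow_rpow_le_of_min_natCast {F : Ω → ℝ≥0∞} (hF : Measurable F) (hp : 0 < p)
    (h : ∀ N : ℕ, (∫⁻ ω, min (F ω) N ^ p ∂μ) ^ (1 / p) ≤ B) :
    (∫⁻ ω, F ω ^ p ∂μ) ^ (1 / p) ≤ B := by
  simpa only [iSup_min_natCast] using lintegral_iSup_rpow_rpow_le (μ := μ)
    (f := fun N ω => min (F ω) N) (fun N => hF.min measurable_const)
    (fun a b hab ω => min_le_min_left _ (by exact_mod_cast hab)) hp h

lemma lintegral_min_natCast_rpow_ne_top [IsFiniteMeasure μ] (F : Ω → ℝ≥0∞) (N : ℕ) (hp : 0 ≤ p) :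
    ∫⁻ ω, min (F ω) N ^ p ∂μ ≠ ∞ :=
  ne_top_of_le_ne_top
    (lintegral_const_lt_top (μ := μ) (rpow_ne_top_of_nonneg hp (natCast_ne_top N))).ne
    (lintegral_mono fun _ => rpow_le_rpow (min_le_right _ _) hp)

end Truncation

section WeakToStrong

variable {Ω : Type*} [MeasurableSpace Ω] {μ : Measure Ω} {M : Ω → ℝ} {W : Ω → ℝ≥0∞} {p q : ℝ}

lemma lintegral_ofReal_rpow_le_of_meas_le (hM0 : 0 ≤ M) (hM : Measurable M) (hW : Measurable W)
    (hpq : p.HolderConjugate q)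
    (hweak : ∀ t > 0, ENNReal.ofReal t * μ {ω | t ≤ M ω} ≤ ∫⁻ ω in {ω | t ≤ M ω}, W ω ∂μ) :
    ∫⁻ ω, ENNReal.ofReal (M ω) ^ q ∂μ
      ≤ ENNReal.ofReal p * ∫⁻ ω, W ω * ENNReal.ofReal (M ω) ^ (q - 1) ∂μ := by
  have hq1 : 0 < q - 1 := hpq.symm.sub_one_pos
  have hq : 0 < q := by linarith
  set ν := μ.withDensity W
  have hlevel : ∀ t > 0, μ {ω | t ≤ M ω} * ENNReal.ofReal (t ^ (q - 1))
      ≤ ν {ω | t ≤ M ω} * ENNReal.ofReal (t ^ (q - 1 - 1)) := by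
    intro t ht
    rw [withDensity_apply _ (measurableSet_le measurable_const hM)]
    have hpow : ENNReal.ofReal (t ^ (q - 1))
        = ENNReal.ofReal t * ENNReal.ofReal (t ^ (q - 1 - 1)) := by
      rw [← ENNReal.ofReal_mul ht.le, ← Real.rpow_one_add' ht.le (by linarith)]
      ring_nf
    rw [hpow, ← mul_assoc, mul_comm (μ _)]
    gcongr
    exact hweak t ht
  calc ∫⁻ ω, ENNReal.ofReal (M ω) ^ q ∂μ
      = ENNReal.ofReal q * ∫⁻ t in Ioi 0, μ {ω | t ≤ M ω} * ENNReal.ofReal (t ^ (q - 1)) := by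
        rw [← lintegral_rpow_eq_lintegral_meas_le_mul μ (ae_of_all _ hM0) hM.aemeasurable hq]
        exact lintegral_congr fun ω => ofReal_rpow_of_nonneg (hM0 ω) hq.le
    _ ≤ ENNReal.ofReal p * (ENNReal.ofReal (q - 1) *
          ∫⁻ t in Ioi 0, ν {ω | t ≤ M ω} * ENNReal.ofReal (t ^ (q - 1 - 1))) := by
        rw [← mul_assoc, ← ENNReal.ofReal_mul hpq.nonneg, mul_comm p, hpq.symm.sub_one_mul_conj]
        exact mul_le_mul_right (setLIntegral_mono' measurableSet_Ioi hlevel) _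
    _ = ENNReal.ofReal p * ∫⁻ ω, W ω * ENNReal.ofReal (M ω) ^ (q - 1) ∂μ := by
        rw [← lintegral_rpow_eq_lintegral_meas_le_mul ν (ae_of_all _ hM0) hM.aemeasurable hq1,
          lintegral_withDensity_eq_lintegral_mul _ hW (hM.pow_const _).ennreal_ofReal]
        congr 1
        exact lintegral_congr fun ω => by
          simp only [Pi.mul_apply, ofReal_rpow_of_nonneg (hM0 ω) hq1.le]

lemma rpow_lintegral_ofReal_rpow_le_of_meas_le_of_ne_top (hM0 : 0 ≤ M) (hM : Measurable M)
    (hW : Measurable W) (hpq : p.HolderConjugate q)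
    (hweak : ∀ t > 0, ENNReal.ofReal t * μ {ω | t ≤ M ω} ≤ ∫⁻ ω in {ω | t ≤ M ω}, W ω ∂μ)
    (hfin : ∫⁻ ω, ENNReal.ofReal (M ω) ^ q ∂μ ≠ ∞) :
    (∫⁻ ω, ENNReal.ofReal (M ω) ^ q ∂μ) ^ (1 / q)
      ≤ ENNReal.ofReal p * (∫⁻ ω, W ω ^ q ∂μ) ^ (1 / q) := by
  set I := ∫⁻ ω, ENNReal.ofReal (M ω) ^ q ∂μ
  have hholder : ∫⁻ ω, W ω * ENNReal.ofReal (M ω) ^ (q - 1) ∂μ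
      ≤ (∫⁻ ω, W ω ^ q ∂μ) ^ (1 / q) * I ^ (1 / p) := by
    have hpow : ∀ ω, (ENNReal.ofReal (M ω) ^ (q - 1)) ^ p = ENNReal.ofReal (M ω) ^ q :=
      fun ω => by rw [← rpow_mul, hpq.symm.sub_one_mul_conj]
    simpa only [Pi.mul_apply, hpow] using lintegral_mul_le_Lp_mul_Lq μ hpq.symm hW.aemeasurable
      (hM.ennreal_ofReal.pow_const (q - 1)).aemeasurable
  refine rpow_le_of_le_mul_rpow (v := 1 / p) (by simpa using hpq.symm.pos) ?_ hfin ?_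
  · simpa only [one_div, add_comm] using hpq.inv_add_inv_eq_one
  · calc I ≤ ENNReal.ofReal p * ∫⁻ ω, W ω * ENNReal.ofReal (M ω) ^ (q - 1) ∂μ :=
          lintegral_ofReal_rpow_le_of_meas_le hM0 hM hW hpq hweak
      _ ≤ ENNReal.ofReal p * ((∫⁻ ω, W ω ^ q ∂μ) ^ (1 / q) * I ^ (1 / p)) := by gcongr
      _ = _ := (mul_assoc _ _ _).symm

lemma rpow_lintegral_ofReal_rpow_le_of_meas_le [IsFiniteMeasure μ] (hM0 : 0 ≤ M)
    (hM : Measurable M) (hW : Measurable W) (hpq : p.HolderConjugate q)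
    (hweak : ∀ t > 0, ENNReal.ofReal t * μ {ω | t ≤ M ω} ≤ ∫⁻ ω in {ω | t ≤ M ω}, W ω ∂μ) :
    (∫⁻ ω, ENNReal.ofReal (M ω) ^ q ∂μ) ^ (1 / q)
      ≤ ENNReal.ofReal p * (∫⁻ ω, W ω ^ q ∂μ) ^ (1 / q) := by
  refine lintegral_rpow_rpow_le_of_min_natCast hM.ennreal_ofReal hpq.symm.pos fun N => ?_
  simp_rw [← ofReal_natCast N, ← ENNReal.ofReal_min]
  have hweakN : ∀ t > 0, ENNReal.ofReal t * μ {ω | t ≤ min (M ω) N}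
      ≤ ∫⁻ ω in {ω | t ≤ min (M ω) N}, W ω ∂μ := by
    intro t ht
    by_cases htN : t ≤ N
    · simpa only [le_min_iff, htN, and_true] using hweak t ht
    · have hempty : {ω | t ≤ min (M ω) N} = ∅ :=
        eq_empty_of_forall_notMem fun ω hω => htN (hω.trans (min_le_right _ _))
      simp only [hempty, Measure.restrict_empty, lintegral_zero_measure, measure_empty, mul_zero,
        le_refl]
  refine rpow_lintegral_ofReal_rpow_le_of_meas_le_of_ne_top
    (fun ω => le_min (hM0 ω) N.cast_nonneg) (hM.min measurable_const) hW hpq hweakN ?_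
  simpa only [ENNReal.ofReal_min, ofReal_natCast]
    using lintegral_min_natCast_rpow_ne_top (μ := μ) _ N hpq.symm.nonneg

end WeakToStrong

section Doob

variable {Ω : Type*}

noncomputable def runningMax (f : ℕ → Ω → ℝ) (n : ℕ) (ω : Ω) : ℝ :=
  (range (n + 1)).sup' nonempty_range_add_one fun k => f k ω

variable {f : ℕ → Ω → ℝ}

lemma le_runningMax {k n : ℕ} (hkn : k ≤ n) (ω : Ω) : f k ω ≤ runningMax f n ω :=
  le_sup' (fun k => f k ω) (mem_range_succ_iff.mpr hkn)

lemma runningMax_nonneg (hf : 0 ≤ f) (n : ℕ) : 0 ≤ runningMax f n :=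
  fun ω => (hf 0 ω).trans (le_runningMax n.zero_le ω)

lemma monotone_runningMax : Monotone (runningMax f) :=
  fun _ _ hmn ω => sup'_le _ _ fun _ hk => le_runningMax ((mem_range_succ_iff.mp hk).trans hmn) ω

lemma measurable_runningMax {m : MeasurableSpace Ω} {n : ℕ} (hf : ∀ k ≤ n, Measurable (f k)) :
    Measurable (runningMax f n) :=
  measurable_range_sup'' hf

variable {m0 : MeasurableSpace Ω} {μ : Measure Ω} [IsFiniteMeasure μ] {ℱ : Filtration ℕ m0}
  {w : Ω → ℝ} {p q : ℝ}

lemma ofReal_mul_meas_le_runningMax_condExp_le (hw : Integrable w μ) (hw0 : 0 ≤ᵐ[μ] w) (n : ℕ)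
    {t : ℝ} (ht : 0 ≤ t) :
    ENNReal.ofReal t * μ {ω | t ≤ runningMax ((fun k => μ[w|ℱ k]) ⊔ 0) n ω}
      ≤ ∫⁻ ω in {ω | t ≤ runningMax ((fun k => μ[w|ℱ k]) ⊔ 0) n ω}, ENNReal.ofReal (w ω) ∂μ := by
  set f : ℕ → Ω → ℝ := (fun k => μ[w|ℱ k]) ⊔ 0
  have hsub : Submartingale f ℱ μ :=
    (martingale_condExp w ℱ μ).submartingale.sup (martingale_zero _ _ _).submartingale
  have hS : MeasurableSet[ℱ n] {ω | t ≤ runningMax f n ω} :=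
    measurable_runningMax
      (fun k hk => (hsub.stronglyMeasurable k).measurable.mono (ℱ.mono hk) le_rfl)
      measurableSet_Ici
  have hfw : f n =ᵐ[μ] μ[w|ℱ n] := by
    filter_upwards [condExp_nonneg hw0] with ω hω using max_eq_left hω
  have hmaximal : ENNReal.ofReal t * μ {ω | t ≤ runningMax f n ω}
      ≤ ENNReal.ofReal (∫ ω in {ω | t ≤ runningMax f n ω}, f n ω ∂μ) := by
    have := maximal_ineq hsub le_sup_right (ε := t.toNNReal) n
    rwa [Real.coe_toNNReal t ht] at this
  refine hmaximal.trans_eq ?_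
  rw [setIntegral_congr_ae (ℱ.le n _ hS) (hfw.mono fun _ h _ => h),
    setIntegral_condExp (ℱ.le n) hw hS,
    ofReal_integral_eq_lintegral_ofReal hw.integrableOn (ae_restrict_of_ae hw0)]

theorem rpow_lintegral_iSup_condExp_rpow_le (hw : Measurable w) (hwi : Integrable w μ)
    (hw0 : 0 ≤ᵐ[μ] w) (hpq : p.HolderConjugate q) :
    (∫⁻ ω, (⨆ n, ENNReal.ofReal ((μ[w|ℱ n]) ω)) ^ q ∂μ) ^ (1 / q)
      ≤ ENNReal.ofReal p * (∫⁻ ω, ENNReal.ofReal (w ω) ^ q ∂μ) ^ (1 / q) := by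
  set f : ℕ → Ω → ℝ := (fun k => μ[w|ℱ k]) ⊔ 0
  have hM : ∀ n, Measurable (runningMax f n) := fun n =>
    measurable_runningMax fun k _ => stronglyMeasurable_condExp.measurable.le (ℱ.le k) |>.max
      measurable_const
  have hM0 : ∀ n, 0 ≤ runningMax f n := runningMax_nonneg fun _ _ => le_sup_right
  calc (∫⁻ ω, (⨆ n, ENNReal.ofReal ((μ[w|ℱ n]) ω)) ^ q ∂μ) ^ (1 / q)
      ≤ (∫⁻ ω, (⨆ n, ENNReal.ofReal (runningMax f n ω)) ^ q ∂μ) ^ (1 / q) := by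
        have hq : 0 < q := hpq.symm.pos
        gcongr with ω n
        exact (le_max_left _ 0).trans (le_runningMax (f := f) le_rfl ω)
    _ ≤ _ := lintegral_iSup_rpow_rpow_le (fun n => (hM n).ennreal_ofReal)
        (fun _ _ hmn ω => ofReal_le_ofReal (monotone_runningMax hmn ω)) hpq.symm.pos fun n =>
          rpow_lintegral_ofReal_rpow_le_of_meas_le (hM0 n) (hM n) hw.ennreal_ofReal hpq
            fun _ ht => ofReal_mul_meas_le_runningMax_condExp_le hwi hw0 n ht.le

lemma lintegral_mul_iSup_condExp_le {G : Ω → ℝ≥0∞} (hG : AEMeasurable G μ) (hw : Measurable w)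
    (hwi : Integrable w μ) (hw0 : 0 ≤ᵐ[μ] w) (hpq : p.HolderConjugate q) :
    ∫⁻ ω, G ω * (⨆ n, ENNReal.ofReal ((μ[w|ℱ n]) ω)) ∂μ
      ≤ (∫⁻ ω, G ω ^ p ∂μ) ^ (1 / p) *
          (ENNReal.ofReal p * (∫⁻ ω, ENNReal.ofReal (w ω) ^ q ∂μ) ^ (1 / q)) := by
  have hw_max : Measurable fun ω => ⨆ n, ENNReal.ofReal ((μ[w|ℱ n]) ω) :=
    .iSup fun n => (stronglyMeasurable_condExp.measurable.le (ℱ.le n)).ennreal_ofReal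
  calc ∫⁻ ω, G ω * (⨆ n, ENNReal.ofReal ((μ[w|ℱ n]) ω)) ∂μ
      ≤ (∫⁻ ω, G ω ^ p ∂μ) ^ (1 / p) *
          (∫⁻ ω, (⨆ n, ENNReal.ofReal ((μ[w|ℱ n]) ω)) ^ q ∂μ) ^ (1 / q) :=
        lintegral_mul_le_Lp_mul_Lq μ hpq hG hw_max.aemeasurable
    _ ≤ _ := by gcongr; exact rpow_lintegral_iSup_condExp_rpow_le hw hwi hw0 hpq

end Doob

section Extrapolation

variable {Ω : Type*} {m0 : MeasurableSpace Ω} {μ : Measure Ω} [IsFiniteMeasure μ]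
  {ℱ : Filtration ℕ m0} {F G : Ω → ℝ≥0∞} {K r : ℝ}

lemma rpow_lintegral_min_natCast_rpow_le (hF : Measurable F) (hG : Measurable G)
    (h : ∀ w : Ω → ℝ, Measurable w → Integrable w μ → (∀ ω, 0 ≤ w ω) →
      ∫⁻ ω, F ω * ENNReal.ofReal (w ω) ∂μ
        ≤ ENNReal.ofReal K *
          ∫⁻ ω, G ω * (⨆ n, ENNReal.ofReal ((μ[w | ℱ n]) ω)) ∂μ)
    (hr : 1 < r) (N : ℕ) :
    (∫⁻ ω, min (F ω) N ^ r ∂μ) ^ (1 / r)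
      ≤ ENNReal.ofReal (K * r) * (∫⁻ ω, G ω ^ r ∂μ) ^ (1 / r) := by
  obtain ⟨q, hrq⟩ : ∃ q, r.HolderConjugate q := ⟨_, .conjExponent hr⟩
  set FN : Ω → ℝ≥0∞ := fun ω => min (F ω) N
  have hFN : Measurable FN := hF.min measurable_const
  have hr1 : 0 ≤ r - 1 := hrq.sub_one_pos.le
  have hbound : ∀ ω, FN ω ^ (r - 1) ≤ (N : ℝ≥0∞) ^ (r - 1) :=
    fun ω => rpow_le_rpow (min_le_right _ _) hr1
  have hNfin : (N : ℝ≥0∞) ^ (r - 1) ≠ ∞ := rpow_ne_top_of_nonneg hr1 (natCast_ne_top N)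
  set w : Ω → ℝ := fun ω => (FN ω ^ (r - 1)).toReal
  have hofReal : ∀ ω, ENNReal.ofReal (w ω) = FN ω ^ (r - 1) :=
    fun ω => ofReal_toReal (ne_top_of_le_ne_top hNfin (hbound ω))
  have hw : Measurable w := (hFN.pow_const _).ennreal_toReal
  have hwi : Integrable w μ :=
    .of_bound hw.aestronglyMeasurable ((N : ℝ≥0∞) ^ (r - 1)).toReal (ae_of_all _ fun ω => by
      rw [Real.norm_of_nonneg toReal_nonneg]; exact toReal_mono hNfin (hbound ω))
  have hwq : ∫⁻ ω, ENNReal.ofReal (w ω) ^ q ∂μ = ∫⁻ ω, FN ω ^ r ∂μ :=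
    lintegral_congr fun ω => by rw [hofReal, ← rpow_mul, hrq.sub_one_mul_conj]
  set c := ∫⁻ ω, FN ω ^ r ∂μ
  have hc : c ≠ ∞ := lintegral_min_natCast_rpow_ne_top F N hrq.nonneg
  have hsplit : ∀ ω, FN ω ^ r ≤ F ω * ENNReal.ofReal (w ω) := fun ω => by
    calc FN ω ^ r = FN ω ^ (1 : ℝ) * FN ω ^ (r - 1) := by
          rw [← rpow_add_of_nonneg _ _ zero_le_one hr1, add_sub_cancel]
      _ ≤ F ω * ENNReal.ofReal (w ω) := by
          rw [rpow_one, hofReal]; gcongr; exact min_le_left _ _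
  refine rpow_le_of_le_mul_rpow (v := 1 / q) (by simpa using hrq.pos) ?_ hc ?_
  · simpa only [one_div] using hrq.inv_add_inv_eq_one
  calc c ≤ ∫⁻ ω, F ω * ENNReal.ofReal (w ω) ∂μ := lintegral_mono hsplit
    _ ≤ ENNReal.ofReal K * ∫⁻ ω, G ω * (⨆ n, ENNReal.ofReal ((μ[w | ℱ n]) ω)) ∂μ :=
        h w hw hwi fun _ => toReal_nonneg
    _ ≤ ENNReal.ofReal K * ((∫⁻ ω, G ω ^ r ∂μ) ^ (1 / r) *
          (ENNReal.ofReal r * c ^ (1 / q))) := by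
        rw [← hwq]
        gcongr
        exact lintegral_mul_iSup_condExp_le hG.aemeasurable hw hwi
          (ae_of_all _ fun _ => toReal_nonneg) hrq
    _ = ENNReal.ofReal (K * r) * (∫⁻ ω, G ω ^ r ∂μ) ^ (1 / r) * c ^ (1 / q) := by
        rw [ofReal_mul' hrq.nonneg]; ring

end Extrapolation

theorem extrapolation_A1_general
    {Ω : Type*} {m0 : MeasurableSpace Ω} {μ : Measure Ω} [IsProbabilityMeasure μ]
    (ℱ : Filtration ℕ m0)
    (F G : Ω → ℝ≥0∞) (hF : Measurable F) (hG : Measurable G)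
    (K : ℝ)
    (h : ∀ w : Ω → ℝ, Measurable w → Integrable w μ → (∀ ω, 0 ≤ w ω) →
      ∫⁻ ω, F ω * ENNReal.ofReal (w ω) ∂μ
        ≤ ENNReal.ofReal K *
          ∫⁻ ω, G ω * (⨆ n, ENNReal.ofReal ((μ[w | ℱ n]) ω)) ∂μ)
    (r : ℝ) (hr : 1 < r) :
    (∫⁻ ω, F ω ^ r ∂μ) ^ (1/r)
      ≤ ENNReal.ofReal (K * r) * (∫⁻ ω, G ω ^ r ∂μ) ^ (1/r) :=
  lintegral_rpow_rpow_le_of_min_natCast hF (by linarith)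
    (rpow_lintegral_min_natCast_rpow_le hF hG h hr)

/-- **Extrapolation of a two-weight `A₁` bound to `L^r` bounds.**
If `E(F·w) ≤ K E(G·w*)` for every weight `w`, then `‖F‖_{L^r} ≤ K r ‖G‖_{L^r}` for every
`r ∈ (1,∞)`. -/
theorem extrapolation_A1
    {Ω : Type*} {m0 : MeasurableSpace Ω} {μ : Measure Ω} [IsProbabilityMeasure μ]
    (ℱ : Filtration ℕ m0)
    (F G : Ω → ℝ≥0∞) (hF : Measurable F) (hG : Measurable G)
    (K : ℝ) (hK : 0 ≤ K)
    (h : ∀ w : Ω → ℝ, Measurable w → Integrable w μ → (∀ ω, 0 ≤ w ω) →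
      ∫⁻ ω, F ω * ENNReal.ofReal (w ω) ∂μ
        ≤ ENNReal.ofReal K *
          ∫⁻ ω, G ω * (⨆ n, ENNReal.ofReal ((μ[w | ℱ n]) ω)) ∂μ)
    (r : ℝ) (hr : 1 < r) :
    (∫⁻ ω, F ω ^ r ∂μ) ^ (1/r)
      ≤ ENNReal.ofReal (K * r) * (∫⁻ ω, G ω ^ r ∂μ) ^ (1/r) :=
  extrapolation_A1_general ℱ F G hF hG K h r hr
end

section
/- Let X be a Banach space, let (Ω,(F_n)_{n∈ℕ},P) be a filtered probability space, and let (g_n)_{n∈ℕ} be an adapted X-valued process with g_0 = 0. Define the conditional square function sg := (∑_{n≥1} E(‖g_n − g_{n−1}‖² | F_{n−1}))^{1/2} and the square function S_2 g := (∑_{n≥1} ‖g_n − g_{n−1}‖²)^{1/2}. Then for every r ∈ [2,∞), ‖sg‖_{L^r(Ω)} ≤ (r/2)^{1/2} ‖S_2 g‖_{L^r(Ω)}. -/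
/-!
Put `p = r / 2`, `α n = E(‖g (n+1) - g n‖² | F n)` and `U n = ‖g (n+1) - g n‖²`; the claim is the
square root of `‖∑ α n‖_p ≤ p ‖∑ U n‖_p`. This holds as soon as `α` is adapted and
`E(α n φ) ≤ E(U n φ)` for every `F n`-measurable `φ ≥ 0`. Truncate at a finite level `c`:
with `T = min (∑ α n) c` and `T_k = min (∑_{n<k} α n) c`, convexity of `x ↦ x ^ p` gives
`T_{k+1} ^ p - T_k ^ p ≤ p α k T_{k+1} ^ (p-1)`, where `T_{k+1} ≤ T` is `F k`-measurable, so
`E T ^ p ≤ p E (∑ U n · T ^ (p-1)) ≤ p ‖∑ U n‖_p ‖T‖_p ^ (p-1)` by Hölder. Dividing by the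
finite `‖T‖_p ^ (p-1)` and letting `c → ∞` concludes.
-/

open MeasureTheory ENNReal

theorem ENNReal.iSup_rpow_of_pos {ι : Sort*} {p : ℝ} (hp : 0 < p) (f : ι → ℝ≥0∞) :
    (⨆ i, f i) ^ p = ⨆ i, f i ^ p :=
  (orderIsoRpow p hp).map_iSup f

theorem Real.rpow_sub_rpow_le_mul_rpow_sub_one {p a b : ℝ} (hp : 1 ≤ p) (hb : 0 ≤ b)
    (hba : b ≤ a) : a ^ p - b ^ p ≤ p * (a - b) * a ^ (p - 1) := by
  rcases hba.eq_or_lt with rfl | hba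
  · simp
  have hslope := (convexOn_rpow hp).slope_le_of_hasDerivAt hb (hb.trans hba.le) hba
    (Real.hasDerivAt_rpow_const (Or.inr hp))
  rw [slope_def_field, div_le_iff₀ (sub_pos.2 hba)] at hslope
  linarith

theorem ENNReal.rpow_le_rpow_add_mul_rpow_sub_one {p : ℝ} (hp : 1 ≤ p) {a b : ℝ≥0∞} (hba : b ≤ a)
    (ha : a ≠ ∞) : a ^ p ≤ b ^ p + ENNReal.ofReal p * ((a - b) * a ^ (p - 1)) := by
  have hb : b ≠ ∞ := ne_top_of_le_ne_top ha hba
  lift a to NNReal using ha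
  lift b to NNReal using hb
  have hp0 : 0 ≤ p := by linarith
  rw [← ENNReal.coe_sub, ← ENNReal.coe_rpow_of_nonneg _ hp0, ← ENNReal.coe_rpow_of_nonneg _ hp0,
    ← ENNReal.coe_rpow_of_nonneg _ (by linarith), ENNReal.ofReal, ← ENNReal.coe_mul,
    ← ENNReal.coe_mul, ← ENNReal.coe_add, ENNReal.coe_le_coe, ← NNReal.coe_le_coe]
  have hba' : (b : ℝ) ≤ a := by exact_mod_cast hba
  push_cast [NNReal.coe_sub (by exact_mod_cast hba), Real.coe_toNNReal _ hp0]
  have := Real.rpow_sub_rpow_le_mul_rpow_sub_one hp b.coe_nonneg hba'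
  rw [mul_assoc] at this
  linarith

theorem lintegral_mul_eq_of_forall_setLIntegral_eq {Ω : Type*} {m m0 : MeasurableSpace Ω}
    {μ : Measure Ω} (hm : m ≤ m0) {f f' : Ω → ℝ≥0∞} (hf : AEMeasurable f μ)
    (hf' : AEMeasurable f' μ)
    (hff' : ∀ s, MeasurableSet[m] s → ∫⁻ x in s, f x ∂μ = ∫⁻ x in s, f' x ∂μ)
    {φ : Ω → ℝ≥0∞} (hφ : Measurable[m] φ) :
    ∫⁻ x, f x * φ x ∂μ = ∫⁻ x, f' x * φ x ∂μ := by
  have htrim : (μ.withDensity f).trim hm = (μ.withDensity f').trim hm := by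
    refine @Measure.ext _ m _ _ fun s hs => ?_
    rw [trim_measurableSet_eq hm hs, trim_measurableSet_eq hm hs,
      withDensity_apply _ (hm s hs), withDensity_apply _ (hm s hs), hff' s hs]
  change ∫⁻ x, (f * φ) x ∂μ = ∫⁻ x, (f' * φ) x ∂μ
  rw [← lintegral_withDensity_eq_lintegral_mul₀ hf (hφ.mono hm le_rfl).aemeasurable,
    ← lintegral_withDensity_eq_lintegral_mul₀ hf' (hφ.mono hm le_rfl).aemeasurable,
    ← lintegral_trim hm hφ, htrim, lintegral_trim hm hφ]

theorem lintegral_ofReal_condExp_mul_le {Ω : Type*} {m m0 : MeasurableSpace Ω} {μ : Measure Ω}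
    (hm : m ≤ m0) [SigmaFinite (μ.trim hm)] {u : Ω → ℝ} (hu : 0 ≤ᵐ[μ] u)
    {φ : Ω → ℝ≥0∞} (hφ : Measurable[m] φ) :
    ∫⁻ x, ENNReal.ofReal (μ[u|m] x) * φ x ∂μ ≤ ∫⁻ x, ENNReal.ofReal (u x) * φ x ∂μ := by
  by_cases hui : Integrable u μ
  swap
  · simp [condExp_of_not_integrable hui]
  refine le_of_eq (lintegral_mul_eq_of_forall_setLIntegral_eq hm
    (stronglyMeasurable_condExp.mono hm).measurable.ennreal_ofReal.aemeasurable
    hui.aemeasurable.ennreal_ofReal (fun s hs => ?_) hφ)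
  rw [← ofReal_integral_eq_lintegral_ofReal integrable_condExp.restrict
      (ae_restrict_of_ae (condExp_nonneg hu)),
    ← ofReal_integral_eq_lintegral_ofReal hui.restrict (ae_restrict_of_ae hu),
    setIntegral_condExp hm hui hs]

theorem ENNReal.min_tsum_rpow_le {p : ℝ} (hp : 1 ≤ p) (a : ℕ → ℝ≥0∞) {c : ℝ≥0∞}
    (hc : c ≠ ∞) :
    min (∑' n, a n) c ^ p
      ≤ ENNReal.ofReal p * ∑' k, a k * min (∑ n ∈ Finset.range (k + 1), a n) c ^ (p - 1) := by
  set t : ℕ → ℝ≥0∞ := fun N => min (∑ n ∈ Finset.range N, a n) c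
  have ht_mono : Monotone t := fun N M hNM =>
    min_le_min_right c (Finset.sum_le_sum_of_subset (Finset.range_subset_range.2 hNM))
  have ht_partial : ∀ N,
      t N ^ p ≤ ENNReal.ofReal p * ∑ k ∈ Finset.range N, a k * t (k + 1) ^ (p - 1) := by
    intro N
    induction N with
    | zero => simp [t, zero_rpow_of_pos (by linarith : 0 < p)]
    | succ N ih =>
      have hincr : t (N + 1) - t N ≤ a N := by
        simp only [t, tsub_le_iff_left, Finset.sum_range_succ]
        rw [← min_add_add_right]
        exact min_le_min_left _ le_self_add
      calc t (N + 1) ^ p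
          ≤ t N ^ p + ENNReal.ofReal p * ((t (N + 1) - t N) * t (N + 1) ^ (p - 1)) :=
            rpow_le_rpow_add_mul_rpow_sub_one hp (ht_mono N.le_succ)
              (ne_top_of_le_ne_top hc (min_le_right _ _))
        _ ≤ ENNReal.ofReal p * ∑ k ∈ Finset.range N, a k * t (k + 1) ^ (p - 1)
              + ENNReal.ofReal p * (a N * t (N + 1) ^ (p - 1)) := by gcongr
        _ = ENNReal.ofReal p * ∑ k ∈ Finset.range (N + 1), a k * t (k + 1) ^ (p - 1) := by
          rw [Finset.sum_range_succ, mul_add]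
  have hsup : min (∑' n, a n) c = ⨆ N, t N := by
    rw [ENNReal.tsum_eq_iSup_nat, iSup_inf_eq]
  rw [hsup, iSup_rpow_of_pos (by linarith)]
  exact iSup_le fun N => (ht_partial N).trans (by gcongr; exact ENNReal.sum_le_tsum _)

theorem ENNReal.rpow_one_div_le_of_le_mul_rpow {p q : ℝ} (hpq : p.HolderConjugate q)
    {I K : ℝ≥0∞} (hI : I ≠ ∞) (h : I ≤ K * I ^ (1 / q)) : I ^ (1 / p) ≤ K := by
  rcases eq_or_ne I 0 with rfl | hI0
  · rw [zero_rpow_of_pos (one_div_pos.2 hpq.pos)]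
    exact zero_le
  have hIq0 : I ^ (1 / q) ≠ 0 := by simp [ENNReal.rpow_eq_zero_iff, hI0, hI]
  have hIq : I ^ (1 / q) ≠ ∞ := rpow_ne_top_of_nonneg (one_div_pos.2 hpq.symm.pos).le hI
  refine (ENNReal.mul_le_mul_iff_left hIq0 hIq).1 (le_of_eq_of_le ?_ h)
  rw [← rpow_add _ _ hI0 hI, one_div, one_div, hpq.inv_add_inv_eq_one, rpow_one]

section Domination

variable {Ω : Type*} {m0 : MeasurableSpace Ω} {μ : Measure Ω} {p : ℝ}

theorem lintegral_rpow_le_of_le_lintegral_mul_rpow_sub_one (hp : 1 ≤ p) {T B : Ω → ℝ≥0∞}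
    (hT : AEMeasurable T μ) (hB : AEMeasurable B μ) (hfin : ∫⁻ ω, T ω ^ p ∂μ ≠ ∞) {C : ℝ≥0∞}
    (h : ∫⁻ ω, T ω ^ p ∂μ ≤ C * ∫⁻ ω, B ω * T ω ^ (p - 1) ∂μ) :
    (∫⁻ ω, T ω ^ p ∂μ) ^ (1 / p) ≤ C * (∫⁻ ω, B ω ^ p ∂μ) ^ (1 / p) := by
  rcases hp.eq_or_lt with rfl | hp1
  · simpa using h
  have hpq := Real.HolderConjugate.conjExponent hp1
  set q := p.conjExponent
  refine ENNReal.rpow_one_div_le_of_le_mul_rpow hpq hfin (h.trans ?_)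
  rw [mul_assoc]
  refine mul_le_mul_right ?_ C
  calc ∫⁻ ω, B ω * T ω ^ (p - 1) ∂μ
      ≤ (∫⁻ ω, B ω ^ p ∂μ) ^ (1 / p) * (∫⁻ ω, (T ω ^ (p - 1)) ^ q ∂μ) ^ (1 / q) :=
        ENNReal.lintegral_mul_le_Lp_mul_Lq μ hpq hB (hT.pow_const _)
    _ = (∫⁻ ω, B ω ^ p ∂μ) ^ (1 / p) * (∫⁻ ω, T ω ^ p ∂μ) ^ (1 / q) := by
        simp only [← rpow_mul, hpq.sub_one_mul_conj]

theorem lintegral_rpow_le_of_forall_min_natCast_le (hp : 0 < p) {A : Ω → ℝ≥0∞}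
    (hA : AEMeasurable A μ) {K : ℝ≥0∞}
    (h : ∀ k : ℕ, (∫⁻ ω, min (A ω) k ^ p ∂μ) ^ (1 / p) ≤ K) :
    (∫⁻ ω, A ω ^ p ∂μ) ^ (1 / p) ≤ K := by
  have hA_sup : ∀ ω, A ω ^ p = ⨆ k : ℕ, min (A ω) k ^ p := fun ω => by
    rw [← iSup_rpow_of_pos hp, ← inf_iSup_eq, iSup_natCast, inf_top_eq]
  simp_rw [hA_sup]
  rw [lintegral_iSup' (fun k => (hA.min aemeasurable_const).pow_const p)
      (ae_of_all _ fun ω k l hkl =>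
        rpow_le_rpow (min_le_min_left _ (Nat.cast_le.2 hkl)) hp.le),
    iSup_rpow_of_pos (one_div_pos.2 hp)]
  exact iSup_le h

variable {ℱ : Filtration ℕ m0} {α U : ℕ → Ω → ℝ≥0∞}

theorem lintegral_min_tsum_rpow_le (hp : 1 ≤ p) (hα : ∀ n, Measurable[ℱ n] (α n))
    (hU : ∀ n, AEMeasurable (U n) μ)
    (hdom : ∀ n φ, Measurable[ℱ n] φ → ∫⁻ ω, α n ω * φ ω ∂μ ≤ ∫⁻ ω, U n ω * φ ω ∂μ)
    {c : ℝ≥0∞} (hc : c ≠ ∞) :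
    ∫⁻ ω, min (∑' n, α n ω) c ^ p ∂μ
      ≤ ENNReal.ofReal p * ∫⁻ ω, (∑' n, U n ω) * min (∑' n, α n ω) c ^ (p - 1) ∂μ := by
  set φ : ℕ → Ω → ℝ≥0∞ := fun k ω => min (∑ n ∈ Finset.range (k + 1), α n ω) c ^ (p - 1)
  have hφ : ∀ k, Measurable[ℱ k] (φ k) := fun k =>
    ((Finset.measurable_sum _ fun n hn =>
      (hα n).mono (ℱ.mono (Nat.lt_succ_iff.1 (Finset.mem_range.1 hn))) le_rfl).min
        measurable_const).pow_const _
  have hα₀ : ∀ n, Measurable (α n) := fun n => (hα n).mono (ℱ.le n) le_rfl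
  have hφ₀ : ∀ k, Measurable (φ k) := fun k => (hφ k).mono (ℱ.le k) le_rfl
  have hφ_le : ∀ k ω, φ k ω ≤ min (∑' n, α n ω) c ^ (p - 1) := fun k ω =>
    rpow_le_rpow (min_le_min_right c (ENNReal.sum_le_tsum _)) (by linarith)
  calc ∫⁻ ω, min (∑' n, α n ω) c ^ p ∂μ
      ≤ ∫⁻ ω, ENNReal.ofReal p * ∑' k, α k ω * φ k ω ∂μ :=
        lintegral_mono fun ω => ENNReal.min_tsum_rpow_le hp _ hc
    _ = ENNReal.ofReal p * ∑' k, ∫⁻ ω, α k ω * φ k ω ∂μ := by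
        rw [lintegral_const_mul' _ _ ofReal_ne_top,
          lintegral_tsum (f := fun k ω => α k ω * φ k ω) fun k =>
            ((hα₀ k).mul (hφ₀ k)).aemeasurable]
    _ ≤ ENNReal.ofReal p * ∑' k, ∫⁻ ω, U k ω * min (∑' n, α n ω) c ^ (p - 1) ∂μ := by
        refine mul_le_mul_right (ENNReal.tsum_le_tsum fun k => ?_) _
        exact (hdom k (φ k) (hφ k)).trans
          (lintegral_mono fun ω => mul_le_mul_right (hφ_le k ω) _)
    _ = ENNReal.ofReal p * ∫⁻ ω, (∑' n, U n ω) * min (∑' n, α n ω) c ^ (p - 1) ∂μ := by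
        simp_rw [← ENNReal.tsum_mul_right]
        rw [lintegral_tsum (f := fun k ω => U k ω * min (∑' n, α n ω) c ^ (p - 1)) fun k =>
          (hU k).mul (((Measurable.tsum hα₀).min measurable_const).pow_const _).aemeasurable]

theorem lintegral_tsum_rpow_le_of_forall_lintegral_mul_le [IsFiniteMeasure μ] (hp : 1 ≤ p)
    (hα : ∀ n, Measurable[ℱ n] (α n)) (hU : ∀ n, AEMeasurable (U n) μ)
    (hdom : ∀ n φ, Measurable[ℱ n] φ → ∫⁻ ω, α n ω * φ ω ∂μ ≤ ∫⁻ ω, U n ω * φ ω ∂μ) :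
    (∫⁻ ω, (∑' n, α n ω) ^ p ∂μ) ^ (1 / p)
      ≤ ENNReal.ofReal p * (∫⁻ ω, (∑' n, U n ω) ^ p ∂μ) ^ (1 / p) := by
  have hA : Measurable fun ω => ∑' n, α n ω :=
    Measurable.tsum fun n => (hα n).mono (ℱ.le n) le_rfl
  refine lintegral_rpow_le_of_forall_min_natCast_le (by linarith) hA.aemeasurable fun k => ?_
  have hfin : ∫⁻ ω, min (∑' n, α n ω) k ^ p ∂μ ≠ ∞ :=
    ne_top_of_le_ne_top
      (lintegral_const_lt_top (rpow_ne_top_of_nonneg (by linarith) (natCast_ne_top k))).ne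
      (lintegral_mono fun ω => rpow_le_rpow (min_le_right _ _) (by linarith))
  exact lintegral_rpow_le_of_le_lintegral_mul_rpow_sub_one hp
    (hA.min measurable_const).aemeasurable (AEMeasurable.tsum hU) hfin
    (lintegral_min_tsum_rpow_le hp hα hU hdom (natCast_ne_top k))

end Domination

theorem conditional_square_function_Lr_general
    {X : Type*} [NormedAddCommGroup X]
    {Ω : Type*} {m0 : MeasurableSpace Ω} {μ : Measure Ω} [IsProbabilityMeasure μ]
    (ℱ : Filtration ℕ m0)
    (g : ℕ → Ω → X) (hg : StronglyAdapted ℱ g)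
    (r : ℝ) (hr : 2 ≤ r) :
    (∫⁻ ω, ((∑' n : ℕ,
        ENNReal.ofReal ((μ[fun ω' => ‖g (n+1) ω' - g n ω'‖ ^ 2 | ℱ n]) ω)) ^ ((1:ℝ)/2)) ^ r ∂μ)
        ^ (1/r)
      ≤ ENNReal.ofReal (Real.sqrt (r / 2)) *
        (∫⁻ ω, ((∑' n : ℕ,
            (‖g (n+1) ω - g n ω‖₊ : ℝ≥0∞) ^ (2:ℝ)) ^ ((1:ℝ)/2)) ^ r ∂μ) ^ (1/r) := by
  have hincr : ∀ n, StronglyMeasurable fun ω => g (n + 1) ω - g n ω := fun n =>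
    ((hg (n + 1)).mono (ℱ.le _)).sub ((hg n).mono (ℱ.le _))
  have hsq : ∀ n ω, (‖g (n + 1) ω - g n ω‖₊ : ℝ≥0∞) ^ (2:ℝ)
      = ENNReal.ofReal (‖g (n + 1) ω - g n ω‖ ^ 2) := fun n ω => by
    rw [rpow_two, ← enorm_eq_nnnorm, ← ofReal_norm, ENNReal.ofReal_pow (norm_nonneg _)]
  have hsqrt_rpow : ∀ x : ℝ≥0∞, (x ^ ((1:ℝ) / 2)) ^ r = x ^ (r / 2) := fun x => by
    rw [← rpow_mul]; ring_nf
  have hroot : ∀ x : ℝ≥0∞, x ^ (1 / r) = (x ^ (1 / (r / 2))) ^ ((1:ℝ) / 2) := fun x => by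
    rw [← rpow_mul]; congr 1; field_simp
  simp only [hsq, hsqrt_rpow]
  rw [hroot, hroot, Real.sqrt_eq_rpow,
    ← ENNReal.ofReal_rpow_of_nonneg (by linarith) (by norm_num),
    ← mul_rpow_of_nonneg _ _ (by norm_num)]
  refine rpow_le_rpow ?_ (by norm_num)
  exact lintegral_tsum_rpow_le_of_forall_lintegral_mul_le (by linarith)
    (fun n => stronglyMeasurable_condExp.measurable.ennreal_ofReal)
    (fun n => ((hincr n).norm.measurable.pow_const 2).ennreal_ofReal.aemeasurable)
    fun n φ hφ =>
      lintegral_ofReal_condExp_mul_le (ℱ.le n) (ae_of_all _ fun ω => by positivity) hφ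

/-- **Conditional square function bound.**
For an adapted process `g` with `g 0 = 0`, the conditional square function `sg` satisfies
`‖sg‖_{L^r} ≤ (r/2)^{1/2} ‖S₂ g‖_{L^r}` for every `r ∈ [2,∞)`. -/
theorem conditional_square_function_Lr
    {X : Type*} [NormedAddCommGroup X] [NormedSpace ℝ X] [CompleteSpace X]
    {Ω : Type*} {m0 : MeasurableSpace Ω} {μ : Measure Ω} [IsProbabilityMeasure μ]
    (ℱ : Filtration ℕ m0)
    (g : ℕ → Ω → X) (hg : StronglyAdapted ℱ g) (hg0 : g 0 = 0)
    (r : ℝ) (hr : 2 ≤ r) :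
    (∫⁻ ω, ((∑' n : ℕ,
        ENNReal.ofReal ((μ[fun ω' => ‖g (n+1) ω' - g n ω'‖ ^ 2 | ℱ n]) ω)) ^ ((1:ℝ)/2)) ^ r ∂μ)
        ^ (1/r)
      ≤ ENNReal.ofReal (Real.sqrt (r / 2)) *
        (∫⁻ ω, ((∑' n : ℕ,
            (‖g (n+1) ω - g n ω‖₊ : ℝ≥0∞) ^ (2:ℝ)) ^ ((1:ℝ)/2)) ^ r ∂μ) ^ (1/r) :=
  conditional_square_function_Lr_general ℱ g hg r hr
end

section
/- Let X be a Banach space, φ : X → ℝ a convex function, and x ∈ X a point such that L := limsup_{y→0} |φ(x+y) − φ(x)|/‖y‖ < ∞ and lim_{y→0} (φ(x+y) + φ(x−y) − 2φ(x))/‖y‖ = 0. Then φ is Fréchet differentiable at x, and its Fréchet derivative satisfies ‖φ'(x)‖_{X*} ≤ L. -/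
open Filter Topology Set

/-! A convex function has one-sided directional derivatives
`p v = lim_{t ↓ 0} (φ (x + t v) - φ x) / t`; `p` is sublinear, and the limsup hypothesis bounds it
by `L ‖v‖`. By Hahn–Banach some linear functional `A ≤ p` exists; it is a subgradient of `φ` at `x`
with `‖A‖ ≤ L`. For a subgradient the remainder `r h = φ (x + h) - φ x - A h` is nonnegative, and
`r h + r (-h) = φ (x + h) + φ (x - h) - 2 φ x = o(‖h‖)`, so `A` is the Fréchet derivative. -/

section Slope

variable {E : Type*} [AddCommGroup E] [Module ℝ E] {φ : E → ℝ} {x : E}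

noncomputable def dirSlope (φ : E → ℝ) (x v : E) (t : ℝ) : ℝ := (φ (x + t • v) - φ x) / t

/-- For convex `φ` the slopes decrease as `t ↓ 0`, so this is the one-sided directional
derivative of `φ` at `x` in direction `v`. -/
noncomputable def rightDirDeriv (φ : E → ℝ) (x v : E) : ℝ := sInf (dirSlope φ x v '' Ioi 0)

theorem dirSlope_smul (φ : E → ℝ) (x v : E) (c t : ℝ) :
    dirSlope φ x (c • v) t = c * dirSlope φ x v (c * t) := by
  rcases eq_or_ne c 0 with rfl | hc
  · simp [dirSlope]
  rcases eq_or_ne t 0 with rfl | ht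
  · simp [dirSlope]
  simp only [dirSlope, smul_smul, mul_comm t c]
  field_simp

theorem rightDirDeriv_zero (φ : E → ℝ) (x : E) : rightDirDeriv φ x 0 = 0 := by
  have : dirSlope φ x 0 = fun _ => 0 := by ext t; simp [dirSlope]
  rw [rightDirDeriv, this, (nonempty_Ioi (a := (0 : ℝ))).image_const, csInf_singleton]

theorem ConvexOn.comp_add_smul (hφ : ConvexOn ℝ univ φ) (x v : E) :
    ConvexOn ℝ univ (fun t : ℝ => φ (x + t • v)) :=
  (hφ.translate_right x).comp_linearMap (LinearMap.toSpanSingleton ℝ E v)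

theorem ConvexOn.dirSlope_mono (hφ : ConvexOn ℝ univ φ) (v : E) {t₁ t₂ : ℝ} (ht₁ : t₁ ≠ 0)
    (ht₂ : t₂ ≠ 0) (h : t₁ ≤ t₂) : dirSlope φ x v t₁ ≤ dirSlope φ x v t₂ := by
  simpa [dirSlope] using
    (hφ.comp_add_smul x v).secant_mono (mem_univ 0) (mem_univ t₁) (mem_univ t₂) ht₁ ht₂ h

theorem ConvexOn.bddBelow_dirSlope (hφ : ConvexOn ℝ univ φ) (v : E) :
    BddBelow (dirSlope φ x v '' Ioi 0) := by
  refine ⟨dirSlope φ x v (-1), ?_⟩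
  rintro _ ⟨t, ht, rfl⟩
  exact hφ.dirSlope_mono v (by norm_num) ht.ne' (by linarith [mem_Ioi.mp ht])

theorem ConvexOn.tendsto_dirSlope (hφ : ConvexOn ℝ univ φ) (v : E) :
    Tendsto (dirSlope φ x v) (𝓝[>] 0) (𝓝 (rightDirDeriv φ x v)) :=
  MonotoneOn.tendsto_nhdsGT (fun _ ht _ hs h => hφ.dirSlope_mono v ht.ne' hs.ne' h)
    (hφ.bddBelow_dirSlope v)

theorem ConvexOn.rightDirDeriv_le_dirSlope (hφ : ConvexOn ℝ univ φ) (v : E) {t : ℝ}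
    (ht : 0 < t) : rightDirDeriv φ x v ≤ dirSlope φ x v t :=
  csInf_le (hφ.bddBelow_dirSlope v) (mem_image_of_mem _ ht)

theorem ConvexOn.rightDirDeriv_smul (hφ : ConvexOn ℝ univ φ) (v : E) {c : ℝ} (hc : 0 < c) :
    rightDirDeriv φ x (c • v) = c * rightDirDeriv φ x v := by
  have hmul : Tendsto (c * ·) (𝓝[>] (0 : ℝ)) (𝓝[>] 0) :=
    tendsto_iff_comap.mpr (comap_mulLeft_nhdsGT_zero hc).ge
  refine tendsto_nhds_unique (hφ.tendsto_dirSlope (c • v)) ?_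
  rw [funext (dirSlope_smul φ x v c)]
  exact ((hφ.tendsto_dirSlope v).comp hmul).const_mul c

theorem ConvexOn.dirSlope_add_le (hφ : ConvexOn ℝ univ φ) (u v : E) {t : ℝ} (ht : 0 < t) :
    dirSlope φ x (u + v) t ≤ dirSlope φ x u (2 * t) + dirSlope φ x v (2 * t) := by
  have hmid := hφ.2 (mem_univ (x + (2 * t) • u)) (mem_univ (x + (2 * t) • v))
    (by norm_num : (0 : ℝ) ≤ 1 / 2) (by norm_num : (0 : ℝ) ≤ 1 / 2) (by norm_num)
  have hpt : (1 / 2 : ℝ) • (x + (2 * t) • u) + (1 / 2 : ℝ) • (x + (2 * t) • v)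
      = x + t • (u + v) := by module
  rw [hpt, smul_eq_mul, smul_eq_mul] at hmid
  simp only [dirSlope]
  rw [← add_div, div_le_div_iff₀ ht (by positivity)]
  nlinarith

theorem ConvexOn.rightDirDeriv_add_le (hφ : ConvexOn ℝ univ φ) (u v : E) :
    rightDirDeriv φ x (u + v) ≤ rightDirDeriv φ x u + rightDirDeriv φ x v := by
  have hmul : Tendsto (2 * ·) (𝓝[>] (0 : ℝ)) (𝓝[>] 0) :=
    tendsto_iff_comap.mpr (comap_mulLeft_nhdsGT_zero two_pos).ge
  exact le_of_tendsto_of_tendsto (hφ.tendsto_dirSlope (u + v))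
    (((hφ.tendsto_dirSlope u).add (hφ.tendsto_dirSlope v)).comp hmul)
    (eventually_nhdsWithin_of_forall fun t ht => hφ.dirSlope_add_le u v ht)

end Slope

section Normed

variable {E : Type*} [NormedAddCommGroup E] [NormedSpace ℝ E] {φ : E → ℝ} {x : E}

theorem ConvexOn.rightDirDeriv_le_of_eventually_le (hφ : ConvexOn ℝ univ φ) {C : ℝ}
    (hC : ∀ᶠ y in 𝓝[≠] (0 : E), φ (x + y) - φ x ≤ C * ‖y‖) (v : E) :
    rightDirDeriv φ x v ≤ C * ‖v‖ := by
  rcases eq_or_ne v 0 with rfl | hv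
  · simp [rightDirDeriv_zero]
  have hline : Tendsto (· • v) (𝓝[>] (0 : ℝ)) (𝓝[≠] (0 : E)) := by
    refine tendsto_nhdsWithin_of_tendsto_nhds_of_eventually_within _ ?_ ?_
    · exact ((continuous_id.smul continuous_const).tendsto' 0 0 (zero_smul ℝ v)).mono_left
        nhdsWithin_le_nhds
    · exact eventually_nhdsWithin_of_forall fun t ht => smul_ne_zero (ne_of_gt ht) hv
  refine le_of_tendsto (hφ.tendsto_dirSlope v) ?_
  filter_upwards [hline.eventually hC, self_mem_nhdsWithin] with t hbound ht
  rw [norm_smul, Real.norm_of_nonneg (le_of_lt ht)] at hbound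
  rw [dirSlope, div_le_iff₀ ht]
  linarith

theorem ConvexOn.exists_subgradient_norm_le (hφ : ConvexOn ℝ univ φ) {C : ℝ} (hC : 0 ≤ C)
    (hbound : ∀ v, rightDirDeriv φ x v ≤ C * ‖v‖) :
    ∃ A : E →L[ℝ] ℝ, ‖A‖ ≤ C ∧ ∀ v, A v ≤ φ (x + v) - φ x := by
  obtain ⟨g, -, hg⟩ := exists_extension_of_le_sublinear ⟨⊥, 0⟩ (rightDirDeriv φ x)
    (fun c hc v => hφ.rightDirDeriv_smul v hc) hφ.rightDirDeriv_add_le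
    (fun ⟨v, hv⟩ => by simp [(Submodule.mem_bot ℝ).mp hv, rightDirDeriv_zero])
  have hg_norm : ∀ v, ‖g v‖ ≤ C * ‖v‖ := fun v => by
    have hneg := (hg (-v)).trans (hbound (-v))
    rw [map_neg, norm_neg] at hneg
    rw [Real.norm_eq_abs, abs_le]
    exact ⟨by linarith, (hg v).trans (hbound v)⟩
  refine ⟨g.mkContinuous C hg_norm, g.mkContinuous_norm_le hC hg_norm, fun v => ?_⟩
  simpa [dirSlope] using (hg v).trans (hφ.rightDirDeriv_le_dirSlope v one_pos)

theorem ConvexOn.rightDirDeriv_le_limsup (hφ : ConvexOn ℝ univ φ)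
    (hL : limsup (fun y => ENNReal.ofReal (|φ (x + y) - φ x| / ‖y‖)) (𝓝[≠] 0) < ⊤) (v : E) :
    rightDirDeriv φ x v ≤
      (limsup (fun y => ENNReal.ofReal (|φ (x + y) - φ x| / ‖y‖)) (𝓝[≠] 0)).toReal * ‖v‖ := by
  set L := limsup (fun y => ENNReal.ofReal (|φ (x + y) - φ x| / ‖y‖)) (𝓝[≠] 0)
  refine ge_of_tendsto
    (((continuous_mul_const ‖v‖).tendsto L.toReal).mono_left
      (nhdsWithin_le_nhds (s := Ioi L.toReal))) ?_
  filter_upwards [self_mem_nhdsWithin] with C (hC : _ < C)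
  refine hφ.rightDirDeriv_le_of_eventually_le ?_ v
  filter_upwards [eventually_lt_of_limsup_lt ((ENNReal.lt_ofReal_iff_toReal_lt hL.ne).2 hC),
    self_mem_nhdsWithin] with y hy (hy0 : y ≠ 0)
  have hC0 : 0 < C := lt_of_le_of_lt ENNReal.toReal_nonneg hC
  rw [ENNReal.ofReal_lt_ofReal_iff hC0, div_lt_iff₀ (norm_pos_iff.2 hy0)] at hy
  linarith [le_abs_self (φ (x + y) - φ x)]

theorem hasFDerivAt_of_forall_le_of_tendsto {A : E →L[ℝ] ℝ} (hA : ∀ v, A v ≤ φ (x + v) - φ x)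
    (hsym : Tendsto (fun y => (φ (x + y) + φ (x - y) - 2 * φ x) / ‖y‖) (𝓝[≠] 0) (𝓝 0)) :
    HasFDerivAt φ A x := by
  have hsym' : (fun y => φ (x + y) + φ (x - y) - 2 * φ x) =o[𝓝 0] fun y => y := by
    rw [← Asymptotics.isLittleO_norm_right, ← nhdsWithin_univ, ← union_compl_self {(0 : E)},
      ← insert_eq]
    refine Asymptotics.IsLittleO.insert ?_ (by simp only [add_zero, sub_zero]; ring)
    exact (Asymptotics.isLittleO_iff_tendsto' (eventually_nhdsWithin_of_forall
      fun y (hy : y ≠ 0) h => absurd (norm_eq_zero.1 h) hy)).2 hsym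
  rw [hasFDerivAt_iff_isLittleO_nhds_zero]
  refine (Asymptotics.IsBigO.of_bound 1 (Eventually.of_forall fun y => ?_)).trans_isLittleO hsym'
  have hy := hA y
  have hny := hA (-y)
  rw [map_neg, ← sub_eq_add_neg] at hny
  rw [Real.norm_of_nonneg (by linarith), Real.norm_of_nonneg (by linarith)]
  linarith

end Normed

/-- **Fréchet differentiability of convex functions.**
If `φ` is convex, locally Lipschitz-bounded at `x` with bound `L` (in the limsup sense),
and the symmetric difference quotient tends to `0`, then `φ` is Fréchet differentiable
at `x` with `‖φ'(x)‖ ≤ L`. -/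
theorem frechet_differentiable_of_convex
    {X : Type*} [NormedAddCommGroup X] [NormedSpace ℝ X]
    (φ : X → ℝ) (hφ : ConvexOn ℝ Set.univ φ) (x : X)
    (L : ENNReal)
    (hL : L = Filter.limsup
      (fun y : X => ENNReal.ofReal (|φ (x + y) - φ x| / ‖y‖)) (𝓝[≠] (0 : X)))
    (hLfin : L < ⊤)
    (hsym : Filter.Tendsto
      (fun y : X => (φ (x + y) + φ (x - y) - 2 * φ x) / ‖y‖) (𝓝[≠] (0 : X)) (𝓝 0)) :
    ∃ A : X →L[ℝ] ℝ, HasFDerivAt φ A x ∧ ENNReal.ofReal ‖A‖ ≤ L := by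
  subst hL
  obtain ⟨A, hA_norm, hA⟩ :=
    hφ.exists_subgradient_norm_le ENNReal.toReal_nonneg (hφ.rightDirDeriv_le_limsup hLfin)
  exact ⟨A, hasFDerivAt_of_forall_le_of_tendsto hA hsym, ENNReal.ofReal_le_of_le_toReal hA_norm⟩
end

section
/- Let p ∈ (1,2] and let X be a (p,C)-smooth Banach space. Then the function φ(x) := ‖x‖^p is Fréchet differentiable at every point x ∈ X, and its Fréchet derivative satisfies ‖φ'(x)‖_{X*} ≤ p‖x‖^{p−1}. -/
/-!
Take a norming functional `f` of `x` (`‖f‖ ≤ 1`, `f x = ‖x‖`, by Hahn–Banach) and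
`A = p ‖x‖^{p-1} f`. Convexity of `t ↦ t^p` makes `A` a subgradient of `‖·‖^p` at `x`, so the
remainder `r(y) = ‖x+y‖^p - ‖x‖^p - A y` is nonnegative. Adding `r(-y) ≥ 0` to the smoothness
inequality at `(x, y)` gives `r(y) ≤ 2 C^p ‖y‖^p`, which is `o(‖y‖)` because `p > 1`.
-/

open Filter Asymptotics Topology

theorem Real.rpow_add_mul_sub_le_rpow {p s t : ℝ} (hp : 1 ≤ p) (hs : 0 ≤ s) (ht : 0 ≤ t) :
    s ^ p + p * s ^ (p - 1) * (t - s) ≤ t ^ p := by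
  rcases hs.eq_or_lt with rfl | hs
  · rcases hp.eq_or_lt with rfl | hp
    · simp
    · simp [Real.zero_rpow (by linarith : p ≠ 0), Real.zero_rpow (by linarith : p - 1 ≠ 0),
        Real.rpow_nonneg ht]
  have bernoulli := one_add_mul_self_le_rpow_one_add (by linarith [div_nonneg ht hs.le] :
    -1 ≤ t / s - 1) hp
  rw [add_sub_cancel, Real.div_rpow ht hs.le, le_div_iff₀ (by positivity)] at bernoulli
  calc s ^ p + p * s ^ (p - 1) * (t - s) = (1 + p * (t / s - 1)) * s ^ p := by
        rw [Real.rpow_sub_one hs.ne']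
        field_simp
    _ ≤ t ^ p := bernoulli

theorem isLittleO_norm_rpow_id {E : Type*} [SeminormedAddCommGroup E] {p : ℝ} (hp : 1 < p) :
    (fun y : E => ‖y‖ ^ p) =o[𝓝 0] fun y => y := by
  have hp1 : 0 < p - 1 := sub_pos.2 hp
  have hsmall : (fun y : E => ‖y‖ ^ (p - 1)) =o[𝓝 0] fun _ => (1 : ℝ) := by
    rw [isLittleO_one_iff]
    simpa [Real.zero_rpow hp1.ne'] using
      (continuous_norm.tendsto (0 : E)).rpow_const (Or.inr hp1.le)
  refine isLittleO_norm_right.mp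
    ((hsmall.mul_isBigO (isBigO_refl (fun y : E => ‖y‖) _)).congr (fun y => ?_) fun y => one_mul _)
  rw [← Real.rpow_add_one' (norm_nonneg y) (by linarith), sub_add_cancel]

section NormingFunctional

variable {E : Type*} [NormedAddCommGroup E] [NormedSpace ℝ E]
  {x : E} {f : StrongDual ℝ E} {p : ℝ}

theorem norm_rpow_add_mul_apply_le_norm_add_rpow (hf : ‖f‖ ≤ 1) (hfx : f x = ‖x‖) (hp : 1 ≤ p)
    (y : E) : ‖x‖ ^ p + p * ‖x‖ ^ (p - 1) * f y ≤ ‖x + y‖ ^ p := by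
  have hfy : f y ≤ ‖x + y‖ - ‖x‖ := by
    have : f (x + y) ≤ ‖x + y‖ :=
      (le_abs_self _).trans ((f.le_opNorm _).trans (mul_le_of_le_one_left (norm_nonneg _) hf))
    rw [map_add, hfx] at this
    linarith
  calc ‖x‖ ^ p + p * ‖x‖ ^ (p - 1) * f y
      ≤ ‖x‖ ^ p + p * ‖x‖ ^ (p - 1) * (‖x + y‖ - ‖x‖) := by gcongr
    _ ≤ ‖x + y‖ ^ p := Real.rpow_add_mul_sub_le_rpow hp (norm_nonneg _) (norm_nonneg _)

theorem norm_add_rpow_le_of_smooth {C : ℝ}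
    (hsmooth : ∀ x y : E, (1/2) * (‖x + y‖ ^ p + ‖x - y‖ ^ p) ≤ ‖x‖ ^ p + C ^ p * ‖y‖ ^ p)
    (hf : ‖f‖ ≤ 1) (hfx : f x = ‖x‖) (hp : 1 ≤ p) (y : E) :
    ‖x + y‖ ^ p ≤ ‖x‖ ^ p + p * ‖x‖ ^ (p - 1) * f y + 2 * C ^ p * ‖y‖ ^ p := by
  have hneg := norm_rpow_add_mul_apply_le_norm_add_rpow hf hfx hp (-y)
  rw [map_neg, ← sub_eq_add_neg] at hneg
  linarith [hsmooth x y]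

theorem hasFDerivAt_norm_rpow_of_smooth {C : ℝ}
    (hsmooth : ∀ x y : E, (1/2) * (‖x + y‖ ^ p + ‖x - y‖ ^ p) ≤ ‖x‖ ^ p + C ^ p * ‖y‖ ^ p)
    (hf : ‖f‖ ≤ 1) (hfx : f x = ‖x‖) (hp : 1 < p) :
    HasFDerivAt (fun z : E => ‖z‖ ^ p) ((p * ‖x‖ ^ (p - 1)) • f) x := by
  rw [hasFDerivAt_iff_isLittleO_nhds_zero]
  refine (isBigO_of_le' (c := 2 * C ^ p) _ fun y => ?_).trans_isLittleO (isLittleO_norm_rpow_id hp)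
  have lower := norm_rpow_add_mul_apply_le_norm_add_rpow hf hfx hp.le y
  have upper := norm_add_rpow_le_of_smooth hsmooth hf hfx hp.le y
  rw [smul_apply, smul_eq_mul, Real.norm_of_nonneg (by linarith),
    Real.norm_of_nonneg (by positivity)]
  linarith

end NormingFunctional

theorem frechet_differentiable_norm_rpow_of_smooth_general
    {X : Type*} [NormedAddCommGroup X] [NormedSpace ℝ X]
    (p C : ℝ) (hp : 1 < p)
    (hsmooth : ∀ x y : X,
      (1/2) * (‖x + y‖ ^ p + ‖x - y‖ ^ p) ≤ ‖x‖ ^ p + C ^ p * ‖y‖ ^ p) :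
    ∀ x : X, ∃ A : X →L[ℝ] ℝ,
      HasFDerivAt (fun z : X => ‖z‖ ^ p) A x ∧ ‖A‖ ≤ p * ‖x‖ ^ (p - 1) := by
  intro x
  obtain ⟨f, hf, hfx⟩ := exists_dual_vector'' ℝ x
  refine ⟨_, hasFDerivAt_norm_rpow_of_smooth hsmooth hf hfx hp, ?_⟩
  rw [norm_smul, Real.norm_of_nonneg (by positivity)]
  exact mul_le_of_le_one_right (by positivity) hf

/-- **Differentiability of `‖·‖^p` on a `(p,C)`-smooth space.**
If `X` is `(p,C)`-smooth with `p ∈ (1,2]`, then `φ(x) = ‖x‖^p` is Fréchet differentiable at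
every point, with `‖φ'(x)‖ ≤ p ‖x‖^{p-1}`. -/
theorem frechet_differentiable_norm_rpow_of_smooth
    {X : Type*} [NormedAddCommGroup X] [NormedSpace ℝ X]
    (p C : ℝ) (hp : 1 < p) (hp2 : p ≤ 2) (hC : 0 < C)
    (hsmooth : ∀ x y : X,
      (1/2) * (‖x + y‖ ^ p + ‖x - y‖ ^ p) ≤ ‖x‖ ^ p + C ^ p * ‖y‖ ^ p) :
    ∀ x : X, ∃ A : X →L[ℝ] ℝ,
      HasFDerivAt (fun z : X => ‖z‖ ^ p) A x ∧ ‖A‖ ≤ p * ‖x‖ ^ (p - 1) :=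
  frechet_differentiable_norm_rpow_of_smooth_general p C hp hsmooth
end

section
/- Let p ∈ (1,2] and let X be a (p,C_sm)-smooth Banach space. Then the Fréchet derivative φ' of the function φ(x) := ‖x‖^p satisfies the Hölder estimate ‖φ'(x) − φ'(y)‖_{X*} ≤ 2^{p+1} C_sm^p ‖x − y‖^{p−1} for all x, y ∈ X. -/
/-!
`φ = ‖·‖ ^ p` is convex, so `φ' u h ≤ φ (u + h) - φ u`. Adding this at `x` with increment `h` and
at `y` with increment `-h`, the two points `x + h`, `y - h` are `c ± w` with `c = (x + y) / 2` and
`w = (x - y) / 2 + h`; smoothness at `(c, w)` and convexity at `c` give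
`(φ' x - φ' y) h ≤ 2 Csm ^ p ‖(x - y) / 2 + h‖ ^ p`. Choosing `h` so that `w` is `u` rescaled to
length `‖x - y‖` bounds `(φ' x - φ' y) u` by `4 Csm ^ p ‖x - y‖ ^ (p - 1) ‖u‖`, and `4 ≤ 2 ^ (p + 1)`.
-/

open Set

section
variable {E : Type*} [NormedAddCommGroup E] [NormedSpace ℝ E]

theorem convexOn_univ_norm_rpow {p : ℝ} (hp : 1 ≤ p) : ConvexOn ℝ univ fun x : E => ‖x‖ ^ p := by
  refine ⟨convex_univ, fun u _ v _ a b ha hb hab => ?_⟩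
  calc ‖a • u + b • v‖ ^ p ≤ (a • ‖u‖ + b • ‖v‖) ^ p := by
        gcongr
        exact (convexOn_norm convex_univ).2 trivial trivial ha hb hab
    _ ≤ a • ‖u‖ ^ p + b • ‖v‖ ^ p :=
        (convexOn_rpow hp).2 (norm_nonneg u) (norm_nonneg v) ha hb hab

theorem ConvexOn.hasFDerivAt_apply_le_sub {f : E → ℝ} {f' : E →L[ℝ] ℝ} {x : E}
    (hf : ConvexOn ℝ univ f) (hf' : HasFDerivAt f f' x) (h : E) :
    f' h ≤ f (x + h) - f x := by
  have hline : HasDerivAt (fun t : ℝ => x + t • h) h 0 := by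
    simpa using ((hasDerivAt_id (0 : ℝ)).smul_const h).const_add x
  have hderiv : HasDerivAt (fun t : ℝ => f (x + t • h)) (f' h) 0 := by
    simpa using (zero_smul ℝ h ▸ add_zero x ▸ hf').comp_hasDerivAt (0 : ℝ) hline
  have hconv : ConvexOn ℝ univ fun t : ℝ => f (x + t • h) := by
    simpa [Function.comp_def, AffineMap.lineMap_apply, add_comm] using
      hf.comp_affineMap (AffineMap.lineMap x (x + h))
  simpa [slope_def_field] using
    hconv.le_slope_of_hasDerivAt trivial trivial zero_lt_one hderiv

theorem ContinuousLinearMap.opNorm_le_of_apply_le {L : E →L[ℝ] ℝ} {M : ℝ} (hM : 0 ≤ M)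
    (hL : ∀ u, L u ≤ M * ‖u‖) : ‖L‖ ≤ M := by
  refine L.opNorm_le_bound hM fun u => abs_le.2 ⟨?_, hL u⟩
  exact neg_le.1 (by simpa using hL (-u))

theorem ConvexOn.hasFDerivAt_sub_apply_le_of_smooth {f : E → ℝ} {f' : E → E →L[ℝ] ℝ} {K : ℝ}
    (hf : ConvexOn ℝ univ f) (hf' : ∀ x, HasFDerivAt f (f' x) x)
    (hsmooth : ∀ u v, f (u + v) + f (u - v) ≤ 2 * f u + K * f v) (x y h : E) :
    (f' x - f' y) h ≤ K * f ((1 / 2 : ℝ) • (x - y) + h) := by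
  set c : E := (1 / 2 : ℝ) • x + (1 / 2 : ℝ) • y
  set w : E := (1 / 2 : ℝ) • (x - y) + h
  have hx : f' x h ≤ f (c + w) - f x := by
    convert hf.hasFDerivAt_apply_le_sub (hf' x) h using 3; module
  have hy : -f' y h ≤ f (c - w) - f y := by
    convert hf.hasFDerivAt_apply_le_sub (hf' y) (-h) using 1
    · simp
    · congr 2; module
  have hc : f c ≤ (1 / 2 : ℝ) * f x + (1 / 2 : ℝ) * f y :=
    hf.2 trivial trivial (by norm_num) (by norm_num) (by norm_num)
  have := hsmooth c w
  rw [sub_apply]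
  linarith

theorem ContinuousLinearMap.opNorm_le_of_apply_le_norm_half_add_rpow {L : E →L[ℝ] ℝ}
    {K p : ℝ} (hK : 0 ≤ K) {d : E} (hd : d ≠ 0)
    (hL : ∀ h, L h ≤ K * ‖(1 / 2 : ℝ) • d + h‖ ^ p) : ‖L‖ ≤ 2 * K * ‖d‖ ^ (p - 1) := by
  have hd' : 0 < ‖d‖ := norm_pos_iff.2 hd
  have hLd : L d ≤ 2 * K * ‖d‖ ^ p := by
    have := hL ((1 / 2 : ℝ) • d)
    rw [← add_smul, map_smul, smul_eq_mul] at this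
    norm_num at this
    linarith
  refine L.opNorm_le_of_apply_le (by positivity) fun u => ?_
  rcases eq_or_ne u 0 with rfl | hu
  · simp
  have hu' : 0 < ‖u‖ := norm_pos_iff.2 hu
  set t := ‖d‖ / ‖u‖ with ht
  have htpos : 0 < t := by positivity
  have hLu : t * L u ≤ 2 * K * ‖d‖ ^ p := by
    have := hL (t • u - (1 / 2 : ℝ) • d)
    rw [add_sub_cancel, norm_smul, Real.norm_of_nonneg htpos.le, ht,
      div_mul_cancel₀ _ hu'.ne', map_sub, map_smul, map_smul, smul_eq_mul, smul_eq_mul] at this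
    linarith
  calc L u ≤ 2 * K * ‖d‖ ^ p / t := by rw [le_div_iff₀ htpos]; linarith
    _ = 2 * K * ‖d‖ ^ (p - 1) * ‖u‖ := by
      rw [ht, Real.rpow_sub_one hd'.ne']; field_simp

end

theorem holder_derivative_norm_rpow_of_smooth_general
    {X : Type*} [NormedAddCommGroup X] [NormedSpace ℝ X]
    (p Csm : ℝ) (hp : 1 < p) (hCsm : 0 < Csm)
    (hsmooth : ∀ x y : X,
      (1/2) * (‖x + y‖ ^ p + ‖x - y‖ ^ p) ≤ ‖x‖ ^ p + Csm ^ p * ‖y‖ ^ p)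
    (φ' : X → X →L[ℝ] ℝ)
    (hφ' : ∀ x : X, HasFDerivAt (fun z : X => ‖z‖ ^ p) (φ' x) x) :
    ∀ x y : X, ‖φ' x - φ' y‖ ≤ 2 ^ (p + 1) * Csm ^ p * ‖x - y‖ ^ (p - 1) := by
  intro x y
  rcases eq_or_ne x y with rfl | hxy
  · rw [sub_self, norm_zero]
    positivity
  have hfour : (4 : ℝ) ≤ 2 ^ (p + 1) := by
    calc (4 : ℝ) = 2 ^ (2 : ℝ) := by norm_num
      _ ≤ 2 ^ (p + 1) := Real.rpow_le_rpow_of_exponent_le (by norm_num) (by linarith)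
  have hdiff := (convexOn_univ_norm_rpow hp.le).hasFDerivAt_sub_apply_le_of_smooth hφ'
    (K := 2 * Csm ^ p) (fun u v => by linarith [hsmooth u v]) x y
  calc ‖φ' x - φ' y‖ ≤ 2 * (2 * Csm ^ p) * ‖x - y‖ ^ (p - 1) :=
        (φ' x - φ' y).opNorm_le_of_apply_le_norm_half_add_rpow (by positivity)
          (sub_ne_zero.2 hxy) hdiff
    _ ≤ 2 ^ (p + 1) * Csm ^ p * ‖x - y‖ ^ (p - 1) := by
        rw [← mul_assoc, show (2 : ℝ) * 2 = 4 by norm_num]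
        gcongr

/-- **Hölder continuity of the derivative of `‖·‖^p` on a `(p,Csm)`-smooth space.**
If `X` is `(p,Csm)`-smooth with `p ∈ (1,2]` and `φ'` is the Fréchet derivative of
`φ(x) = ‖x‖^p`, then `‖φ'(x) − φ'(y)‖ ≤ 2^{p+1} Csm^p ‖x − y‖^{p−1}`. -/
theorem holder_derivative_norm_rpow_of_smooth
    {X : Type*} [NormedAddCommGroup X] [NormedSpace ℝ X]
    (p Csm : ℝ) (hp : 1 < p) (hp2 : p ≤ 2) (hCsm : 0 < Csm)
    (hsmooth : ∀ x y : X,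
      (1/2) * (‖x + y‖ ^ p + ‖x - y‖ ^ p) ≤ ‖x‖ ^ p + Csm ^ p * ‖y‖ ^ p)
    (φ' : X → X →L[ℝ] ℝ)
    (hφ' : ∀ x : X, HasFDerivAt (fun z : X => ‖z‖ ^ p) (φ' x) x) :
    ∀ x y : X, ‖φ' x - φ' y‖ ≤ 2 ^ (p + 1) * Csm ^ p * ‖x - y‖ ^ (p - 1) :=
  holder_derivative_norm_rpow_of_smooth_general p Csm hp hCsm hsmooth φ' hφ'
end

section
/- Let p ∈ (1,2] and let X be a Banach space such that the p-th power of the norm has a (p−1)-Hölder derivative with constant C_H. Then X is (p, (C_H^p/p)^{1/p})-smooth; that is, for all x, y ∈ X, (1/2)(‖x+y‖^p + ‖x−y‖^p) ≤ ‖x‖^p + (C_H^p/p)‖y‖^p. -/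
/-!
Along the segment `t ↦ x + t • y`, the Hölder bound on `φ'` says that the slope of
`‖x + t • y‖ ^ p` exceeds its initial slope `φ' x y` by at most `C_H ^ p ‖y‖ ^ p t ^ (p - 1)`, so
`‖x + t • y‖ ^ p - t φ' x y - (C_H ^ p / p) ‖y‖ ^ p t ^ p` is antitone on `[0, 1]`. Comparing
`t = 1` with `t = 0` bounds `‖x + y‖ ^ p`; averaging with the same bound for `-y` cancels the
linear term `φ' x y`.
-/
section HolderDerivative

variable {E : Type*} [NormedAddCommGroup E] [NormedSpace ℝ E]
  {f : E → ℝ} {f' : E → E →L[ℝ] ℝ} {C α : ℝ}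

theorem fderiv_apply_sub_le_of_holder (hα : 0 ≤ α)
    (hf' : ∀ x y, ‖f' x - f' y‖ ≤ C * ‖x - y‖ ^ α) (x y : E) {t : ℝ} (ht : 0 ≤ t) :
    f' (x + t • y) y - f' x y ≤ C * ‖y‖ ^ (α + 1) * t ^ α :=
  calc f' (x + t • y) y - f' x y ≤ ‖(f' (x + t • y) - f' x) y‖ := le_abs_self _
    _ ≤ ‖f' (x + t • y) - f' x‖ * ‖y‖ := (f' (x + t • y) - f' x).le_opNorm y
    _ ≤ C * ‖t • y‖ ^ α * ‖y‖ := by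
        gcongr
        simpa using hf' (x + t • y) x
    _ = C * ‖y‖ ^ (α + 1) * t ^ α := by
        rw [norm_smul, Real.norm_of_nonneg ht, Real.mul_rpow ht (norm_nonneg y),
          Real.rpow_add_one' (norm_nonneg y) (by linarith)]
        ring

theorem le_add_fderiv_apply_add_of_holder (hα : 0 ≤ α) (hf : ∀ x, HasFDerivAt f (f' x) x)
    (hf' : ∀ x y, ‖f' x - f' y‖ ≤ C * ‖x - y‖ ^ α) (x y : E) :
    f (x + y) ≤ f x + f' x y + C / (α + 1) * ‖y‖ ^ (α + 1) := by
  have hα1 : α + 1 ≠ 0 := by linarith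
  set g : ℝ → ℝ := fun t ↦ f (x + t • y) - t * f' x y - C / (α + 1) * ‖y‖ ^ (α + 1) * t ^ (α + 1)
  have hg : ∀ t, HasDerivAt g
      (f' (x + t • y) y - f' x y - C * ‖y‖ ^ (α + 1) * t ^ α) t := by
    intro t
    have hline : HasDerivAt (fun t : ℝ ↦ x + t • y) y t := by
      simpa using ((hasDerivAt_id t).smul_const y).const_add x
    have hpow := Real.hasDerivAt_rpow_const (x := t) (p := α + 1) (Or.inr (by linarith))
    refine ((((hf _).comp_hasDerivAt t hline).sub ((hasDerivAt_id t).mul_const (f' x y))).sub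
      (hpow.const_mul (C / (α + 1) * ‖y‖ ^ (α + 1)))).congr_deriv ?_
    rw [add_sub_cancel_right]
    field_simp
  have hanti : AntitoneOn g (Set.Icc 0 1) := by
    refine antitoneOn_of_hasDerivWithinAt_nonpos (convex_Icc 0 1)
      (fun t _ ↦ (hg t).continuousAt.continuousWithinAt) (fun t _ ↦ (hg t).hasDerivWithinAt) ?_
    intro t ht
    rw [interior_Icc] at ht
    exact sub_nonpos.2 (fderiv_apply_sub_le_of_holder hα hf' x y ht.1.le)
  have := hanti (Set.left_mem_Icc.2 zero_le_one) (Set.right_mem_Icc.2 zero_le_one) zero_le_one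
  simp only [g, one_smul, one_mul, Real.one_rpow, mul_one, zero_smul, add_zero, zero_mul,
    sub_zero, Real.zero_rpow hα1, mul_zero] at this
  linarith

end HolderDerivative

theorem smooth_of_holder_derivative_general
    {X : Type*} [NormedAddCommGroup X] [NormedSpace ℝ X]
    (p CH : ℝ) (hp : 1 < p)
    (φ' : X → X →L[ℝ] ℝ)
    (hφ' : ∀ x : X, HasFDerivAt (fun z : X => ‖z‖ ^ p) (φ' x) x)
    (hHolder : ∀ x y : X, ‖φ' x - φ' y‖ ≤ CH ^ p * ‖x - y‖ ^ (p - 1)) :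
    ∀ x y : X,
      (1/2) * (‖x + y‖ ^ p + ‖x - y‖ ^ p) ≤ ‖x‖ ^ p + (CH ^ p / p) * ‖y‖ ^ p := by
  intro x y
  have taylor := le_add_fderiv_apply_add_of_holder (by linarith : 0 ≤ p - 1) hφ' hHolder x
  have hplus := taylor y
  have hminus := taylor (-y)
  simp only [sub_add_cancel, norm_neg, map_neg, ← sub_eq_add_neg] at hplus hminus
  linarith

/-- **Hölder derivative of `‖·‖^p` implies `p`-smoothness.**
If the derivative `φ'` of `φ(x) = ‖x‖^p` is `(p−1)`-Hölder with constant `C_H` (i.e.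
`‖φ'(x) − φ'(y)‖ ≤ C_H^p ‖x−y‖^{p−1}`), then `X` is `(p, (C_H^p/p)^{1/p})`-smooth. -/
theorem smooth_of_holder_derivative
    {X : Type*} [NormedAddCommGroup X] [NormedSpace ℝ X]
    (p CH : ℝ) (hp : 1 < p) (hp2 : p ≤ 2) (hCH : 0 < CH)
    (φ' : X → X →L[ℝ] ℝ)
    (hφ' : ∀ x : X, HasFDerivAt (fun z : X => ‖z‖ ^ p) (φ' x) x)
    (hHolder : ∀ x y : X, ‖φ' x - φ' y‖ ≤ CH ^ p * ‖x - y‖ ^ (p - 1)) :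
    ∀ x y : X,
      (1/2) * (‖x + y‖ ^ p + ‖x - y‖ ^ p) ≤ ‖x‖ ^ p + (CH ^ p / p) * ‖y‖ ^ p :=
  smooth_of_holder_derivative_general p CH hp φ' hφ' hHolder
end
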